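/- Let G be a subgroup of Perm (Fin 5) acting transitively on Fin 5. If G contains an element of cycle type {4} (a 4-cycle), then G = Perm (Fin 5) or G is conjugate in Perm (Fin 5) to the affine group Aff(F_5) = ⟨(1 2 3 4 5), (2 3 5 4)⟩. -/

import Mathlib

open Equiv

/-- The affine subgroup `Aff(F₅) = ⟨(1 2 3 4 5), (2 3 5 4)⟩` of `Perm (Fin 5)`. -/
def Aff5 : Subgroup (Equiv.Perm (Fin 5)) :=
  Subgroup.closure {c[0, 1, 2, 3, 4], c[1, 2, 4, 3]}

/-- `H` is conjugate to `K` in `Perm (Fin 5)`: `σ H σ⁻¹ = K` for some `σ`. -/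
def SubConj (H K : Subgroup (Equiv.Perm (Fin 5))) : Prop :=
  ∃ σ : Equiv.Perm (Fin 5), Subgroup.map (MulAut.conj σ).toMonoidHom H = K

/-!
Transitivity makes 5 divide `|G|`, so by Cauchy `G` contains a 5-cycle, which after conjugation
is `c₅ = (0 1 2 3 4)`; together with the 4-cycle this gives `20 ∣ |G|`. If `[S₅ : G] ≤ 2` then
`G` contains `A₅`, and the odd 4-cycle forces `G = S₅`. Otherwise `|G| ∈ {20, 40}`, so `⟨c₅⟩` is
the unique Sylow 5-subgroup of `G` (no divisor `d > 1` of 40 is `1 mod 5`); hence `G` lies in the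
normalizer of `⟨c₅⟩`, which is `Aff(F₅)`, of order 20.
-/

open Equiv.Perm Subgroup

namespace Equiv.Perm

variable {α : Type*} [Fintype α] [DecidableEq α]

theorem exists_mem_cycleType_eq_singleton_card (hp : (Fintype.card α).Prime)
    (G : Subgroup (Perm α)) [MulAction.IsPretransitive G α] :
    ∃ g ∈ G, g.cycleType = {Fintype.card α} := by
  have := Fact.mk hp
  obtain ⟨a⟩ : Nonempty α := Fintype.card_pos_iff.mp hp.pos
  have hdvd : Fintype.card α ∣ Nat.card G := by
    rw [← Nat.card_eq_fintype_card, ← MulAction.index_stabilizer_of_transitive G a]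
    exact index_dvd_card _
  obtain ⟨g, hg⟩ := exists_prime_orderOf_dvd_card' (G := G) _ hdvd
  have hord : orderOf (g : Perm α) = Fintype.card α := by rwa [orderOf_coe]
  have hcycle := isCycle_of_prime_order'' hp hord
  exact ⟨g, g.2, by rw [hcycle.cycleType, ← hcycle.orderOf, hord]⟩

theorem eq_top_of_index_le_two_of_sign_eq_neg_one {G : Subgroup (Perm α)} (hG : G.index ≤ 2)
    {g : Perm α} (hgG : g ∈ G) (hg : sign g = -1) : G = ⊤ := by
  by_contra hne
  have h2 : G.index = 2 := by
    have := index_ne_zero_of_finite (H := G)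
    have := (index_eq_one (H := G)).not.mpr hne
    omega
  rw [eq_alternatingGroup_of_index_eq_two h2, mem_alternatingGroup, hg] at hgG
  exact absurd hgG (by decide)

end Equiv.Perm

namespace Subgroup

variable {G : Type*} [Group G]

theorem mem_normalizer_zpowers_iff [Finite G] {g x : G} :
    x ∈ normalizer (zpowers g : Set G) ↔ x * g * x⁻¹ ∈ zpowers g := by
  refine ⟨fun hx ↦ (mem_normalizer_iff.mp hx g).mp (mem_zpowers g),
    fun hx ↦ mem_normalizer_fintype ?_⟩
  rintro _ ⟨k, rfl⟩
  rw [← conj_zpow]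
  exact zpow_mem hx k

theorem le_normalizer_zpowers_of_orderOf_eq_prime {H : Subgroup G} [Finite H] {p : ℕ}
    [Fact p.Prime] {g : G} (hgH : g ∈ H) (hg : orderOf g = p) (hsq : ¬ p ^ 2 ∣ Nat.card H)
    (hcount : ∀ d, d ∣ Nat.card H → d ≡ 1 [MOD p] → d = 1) :
    H ≤ normalizer (zpowers g : Set G) := by
  set g' : H := ⟨g, hgH⟩
  have hg' : Nat.card (zpowers g') = p := by rw [Nat.card_zpowers, orderOf_mk, hg]
  have hpgroup : IsPGroup p (zpowers g') := IsPGroup.of_card (by rw [hg', pow_one])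
  obtain ⟨P, hP⟩ := hpgroup.exists_le_sylow
  have : Subsingleton (Sylow p H) :=
    (Nat.card_eq_one_iff_unique.mp <|
      hcount _ (P.card_dvd_index.trans P.index_dvd_card) (card_sylow_modEq_one p H)).1
  have hPg : zpowers g' = P := by
    obtain ⟨n, hn⟩ := IsPGroup.iff_card.mp P.2
    have hn1 : n ≤ 1 := by
      by_contra! h
      exact hsq ((pow_dvd_pow p h).trans (hn ▸ card_subgroup_dvd_card (P : Subgroup H)))
    refine eq_of_le_of_card_ge hP ?_
    rw [hn, hg']
    exact (Nat.pow_le_pow_right (Fact.out : p.Prime).pos hn1).trans_eq (pow_one p)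
  have hsub : (zpowers g).subgroupOf H = zpowers g' := by
    ext x
    simp [mem_subgroupOf, mem_zpowers_iff, Subtype.ext_iff, g']
  have : ((zpowers g).subgroupOf H).Normal := hsub ▸ hPg ▸ P.normal_of_subsingleton
  exact le_normalizer_of_normal_subgroupOf (zpowers_le.mpr hgH)

end Subgroup

instance fact_prime_five : Fact (Nat.Prime 5) := ⟨Nat.prime_five⟩

local notation "c₅" => (c[0, 1, 2, 3, 4] : Perm (Fin 5))
local notation "d₄" => (c[1, 2, 4, 3] : Perm (Fin 5))

theorem orderOf_c₅ : orderOf c₅ = 5 := orderOf_eq_prime (by decide) (by decide)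

/-- With `c₅ = (x ↦ x + 1)` and `d₄ = (x ↦ 2x)` on `F₅`, `affinePerm (b, j)` is `x ↦ 2ʲx + b`. -/
def affinePerm (p : Fin 5 × Fin 4) : Perm (Fin 5) := c₅ ^ (p.1 : ℕ) * d₄ ^ (p.2 : ℕ)

set_option maxRecDepth 2000 in
theorem exists_affinePerm_eq_of_conj_eq_pow : ∀ g : Perm (Fin 5), ∀ k : Fin 5,
    g * c₅ * g⁻¹ = c₅ ^ (k : ℕ) → ∃ p, affinePerm p = g := by
  decide

theorem normalizer_zpowers_subset_range_affinePerm :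
    (normalizer (zpowers c₅ : Set (Perm (Fin 5))) : Set (Perm (Fin 5))) ⊆
      Set.range affinePerm := by
  intro g hg
  rw [SetLike.mem_coe, mem_normalizer_zpowers_iff, ← mem_powers_iff_mem_zpowers,
    mem_powers_iff_mem_range_orderOf, orderOf_c₅, Finset.mem_image] at hg
  obtain ⟨k, hk, hgk⟩ := hg
  exact exists_affinePerm_eq_of_conj_eq_pow g ⟨k, Finset.mem_range.mp hk⟩ hgk.symm

theorem range_affinePerm_subset_Aff5 : Set.range affinePerm ⊆ Aff5 := by
  rintro _ ⟨p, rfl⟩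
  exact mul_mem (pow_mem (subset_closure (by simp)) _) (pow_mem (subset_closure (by simp)) _)

theorem normalizer_zpowers_eq_Aff5 : normalizer (zpowers c₅ : Set (Perm (Fin 5))) = Aff5 := by
  refine le_antisymm (fun g hg ↦ range_affinePerm_subset_Aff5
    (normalizer_zpowers_subset_range_affinePerm hg)) ((closure_le _).mpr ?_)
  rintro _ (rfl | rfl)
  · exact le_normalizer (mem_zpowers _)
  · rw [SetLike.mem_coe, mem_normalizer_zpowers_iff, (by decide : d₄ * c₅ * d₄⁻¹ = c₅ ^ 2)]
    exact npow_mem_zpowers _ 2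

theorem card_Aff5_le : Nat.card Aff5 ≤ 20 := by
  calc Nat.card Aff5 ≤ Nat.card (Set.range affinePerm) :=
        Nat.card_mono (Set.finite_range _)
          (normalizer_zpowers_eq_Aff5 ▸ normalizer_zpowers_subset_range_affinePerm)
    _ ≤ Nat.card (Fin 5 × Fin 4) := Finite.card_range_le _
    _ = 20 := by simp

theorem le_Aff5_of_card_dvd_forty {H : Subgroup (Perm (Fin 5))} (hc : c₅ ∈ H)
    (h40 : Nat.card H ∣ 40) : H ≤ Aff5 :=
  normalizer_zpowers_eq_Aff5 ▸ le_normalizer_zpowers_of_orderOf_eq_prime hc orderOf_c₅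
    (fun h25 ↦ absurd (h25.trans h40) (by decide))
    (fun d hd hd1 ↦ (by decide : ∀ d ∈ Nat.divisors 40, d ≡ 1 [MOD 5] → d = 1) d
      (Nat.mem_divisors.mpr ⟨hd.trans h40, by norm_num⟩) hd1)

theorem eq_top_or_eq_Aff5_of_c₅_mem {H : Subgroup (Perm (Fin 5))} (hc : c₅ ∈ H)
    {t : Perm (Fin 5)} (htH : t ∈ H) (ht : t.cycleType = {4}) : H = ⊤ ∨ H = Aff5 := by
  have h20 : 20 ∣ Nat.card H := by
    have h4 : orderOf t ∣ Nat.card H := orderOf_mk t htH ▸ orderOf_dvd_natCard (⟨t, htH⟩ : H)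
    have h5 : orderOf c₅ ∣ Nat.card H := orderOf_mk c₅ hc ▸ orderOf_dvd_natCard (⟨c₅, hc⟩ : H)
    rw [← lcm_cycleType, ht, Multiset.lcm_singleton, normalize_eq] at h4
    rw [orderOf_c₅] at h5
    exact Nat.Coprime.mul_dvd_of_dvd_of_dvd (by norm_num) h4 h5
  have h120 : Nat.card H * H.index = 120 := by
    rw [card_mul_index, Nat.card_perm, Nat.card_fin]
    rfl
  rcases le_or_gt H.index 2 with hi | hi
  · refine Or.inl (eq_top_of_index_le_two_of_sign_eq_neg_one hi htH ?_)
    rw [sign_of_cycleType, ht]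
    decide
  · have h40 : Nat.card H = 20 ∨ Nat.card H = 40 := by
      have : Nat.card H ≤ 40 := by nlinarith
      have : 0 < Nat.card H := Nat.card_pos
      omega
    refine Or.inr (eq_of_le_of_card_ge (le_Aff5_of_card_dvd_forty hc ?_) ?_)
    · rcases h40 with h | h <;> norm_num [h]
    · exact card_Aff5_le.trans (by omega)

/-- A transitive subgroup of `Perm (Fin 5)` containing a 4-cycle is the full
symmetric group or is conjugate to `Aff(F₅)`. -/
theorem transitive_subgroup_of_mem_cycleType_4
    (G : Subgroup (Equiv.Perm (Fin 5)))
    (htrans : ∀ x y : Fin 5, ∃ g ∈ G, g x = y)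
    (h4 : ∃ g ∈ G, Equiv.Perm.cycleType g = {4}) :
    G = ⊤ ∨ SubConj G Aff5 := by
  have : MulAction.IsPretransitive G (Fin 5) :=
    ⟨fun x y ↦ let ⟨g, hg, hgy⟩ := htrans x y; ⟨⟨g, hg⟩, hgy⟩⟩
  obtain ⟨s, hsG, hs⟩ := exists_mem_cycleType_eq_singleton_card (by decide) G
  obtain ⟨σ, hσ⟩ :=
    isConj_iff.mp (isConj_of_cycleType_eq (hs.trans (by decide : _ = cycleType c₅)))
  obtain ⟨t, htG, ht⟩ := h4
  let f := (MulAut.conj σ).toMonoidHom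
  rcases eq_top_or_eq_Aff5_of_c₅_mem (H := G.map f) ⟨s, hsG, hσ⟩ ⟨t, htG, rfl⟩
    (by rw [MulEquiv.coe_toMonoidHom, MulAut.conj_apply, cycleType_conj, ht]) with h | h
  · exact Or.inl (map_injective (MulAut.conj σ).injective
      (h.trans (map_top_of_surjective f (MulAut.conj σ).surjective).symm))
  · exact Or.inr ⟨σ, h⟩
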